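/- There is no polynomial P ∈ ℂ[u,v] (equivalently, no P in MvPolynomial (Fin 2) ℂ) such that for all u, v ∈ ℂ with uv ≠ 1, uv ≠ −1 and (uv)⁵ ≠ 1 one has P(u,v) = [(1−u²v)³(1−uv²)³ − (uv)⁴(1−u)³(1−v)³]/[(1−uv)(1−(uv)²)] − ((uv)²/2)·[(1−u)³(1−v)³/(1−uv) − (1+u)³(1+v)³/(1+uv)] + 64·(uv)⁵·(1+uv+(uv)²)(1+(uv)²)·((uv−1)/((uv)⁵−1))². -/

import Mathlib

/-!
On the line `v = 1` the first two summands of `E_st` are polynomials in `u`, while the third is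
`64 u⁵ (1 + u + u²)(1 + u²) / Φ₅(u)²` with `Φ₅ = 1 + u + ⋯ + u⁴`. A polynomial `P` agreeing with
`E_st` would thus give a polynomial identity `P(u, 1) Φ₅(u)² = N(u)` valid off finitely many points,
hence everywhere; but at a primitive fifth root of unity the left side vanishes and `N` does not.
-/

open Polynomial Finset

theorem MvPolynomial.polynomial_eval_aeval {σ R : Type*} [CommSemiring R] (f : σ → R[X])
    (P : MvPolynomial σ R) (x : R) :
    (MvPolynomial.aeval f P).eval x = MvPolynomial.eval (Polynomial.eval x ∘ f) P := by
  rw [MvPolynomial.aeval_def, MvPolynomial.polynomial_eval_eval₂]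
  congr 1
  ext r
  simp

theorem Polynomial.eval_eq_zero_of_eval_mul_eq {R : Type*} [CommRing R] [IsDomain R] [Infinite R]
    {p d r q : R[X]} (hq : q ≠ 0) (h : ∀ x, q.eval x ≠ 0 → p.eval x * d.eval x = r.eval x)
    {a : R} (ha : d.eval a = 0) : r.eval a = 0 := by
  classical
  have hpd : p * d = r := by
    refine eq_of_infinite_eval_eq _ _ (Set.Infinite.mono (fun x hx => ?_)
      q.roots.toFinset.finite_toSet.infinite_compl)
    simp only [Set.mem_compl_iff, Finset.mem_coe, Multiset.mem_toFinset, mem_roots hq,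
      IsRoot.def] at hx
    simpa using h x hx
  rw [← hpd, eval_mul, ha, mul_zero]

theorem IsPrimitiveRoot.one_add_add_sq_mul_one_add_sq_ne_zero {R : Type*} [CommRing R]
    [IsDomain R] {ζ : R} (hζ : IsPrimitiveRoot ζ 5) : (1 + ζ + ζ ^ 2) * (1 + ζ ^ 2) ≠ 0 := by
  have h3 : ζ ^ 3 ≠ 1 := hζ.pow_ne_one_of_pos_of_lt (by norm_num) (by norm_num)
  have h4 : ζ ^ 4 ≠ 1 := hζ.pow_ne_one_of_pos_of_lt (by norm_num) (by norm_num)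
  intro h
  have : (1 - ζ ^ 3) * (1 - ζ ^ 4) = 0 := by linear_combination (1 - ζ) * (1 - ζ ^ 2) * h
  rcases mul_eq_zero.mp this with h | h
  · exact h3 (by linear_combination -h)
  · exact h4 (by linear_combination -h)

noncomputable def Est (u v : ℂ) : ℂ :=
  ((1 - u ^ 2 * v) ^ 3 * (1 - u * v ^ 2) ^ 3 - (u * v) ^ 4 * (1 - u) ^ 3 * (1 - v) ^ 3)
      / ((1 - u * v) * (1 - (u * v) ^ 2))
    - (u * v) ^ 2 / 2 *
        ((1 - u) ^ 3 * (1 - v) ^ 3 / (1 - u * v) - (1 + u) ^ 3 * (1 + v) ^ 3 / (1 + u * v))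
    + 64 * (u * v) ^ 5 * (1 + u * v + (u * v) ^ 2) * (1 + (u * v) ^ 2)
        * ((u * v - 1) / ((u * v) ^ 5 - 1)) ^ 2

noncomputable def Est_one_numerator : ℂ[X] :=
  ((1 - X ^ 2) ^ 2 * (1 - X) ^ 2 + 4 * X ^ 2 * (1 + X) ^ 2) * (∑ i ∈ range 5, X ^ i) ^ 2
    + 64 * X ^ 5 * (1 + X + X ^ 2) * (1 + X ^ 2)

theorem Est_one_mul_geom_sum_sq {u : ℂ} (h5 : u ^ 5 ≠ 1) (hneg : u ≠ -1) :
    Est u 1 * (∑ i ∈ range 5, u ^ i) ^ 2 = Est_one_numerator.eval u := by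
  have h1 : 1 - u ≠ 0 := sub_ne_zero.mpr fun h => h5 (by simp [← h])
  have h1' : u - 1 ≠ 0 := sub_ne_zero.mpr fun h => h1 (by simp [h])
  have h2 : 1 + u ≠ 0 := fun h => hneg (by linear_combination h)
  have h1u2 : 1 - u ^ 2 ≠ 0 := by
    rw [show 1 - u ^ 2 = (1 - u) * (1 + u) by ring]
    exact mul_ne_zero h1 h2
  have h5' : u ^ 5 - 1 ≠ 0 := sub_ne_zero.mpr h5
  have hΦ : ∑ i ∈ range 5, u ^ i = (u ^ 5 - 1) / (u - 1) := by
    rw [eq_div_iff h1']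
    simp only [sum_range_succ, sum_range_zero]
    ring
  simp only [Est_one_numerator, eval_add, eval_mul, eval_sub, eval_pow, eval_X, eval_one,
    eval_ofNat, eval_finsetSum]
  rw [hΦ, Est]
  simp only [mul_one, one_pow, sub_self, zero_pow three_ne_zero]
  field_simp
  ring

theorem eval_Est_one_numerator_ne_zero {ζ : ℂ} (hζ : IsPrimitiveRoot ζ 5) :
    Est_one_numerator.eval ζ ≠ 0 := by
  simpa [Est_one_numerator, eval_finsetSum, hζ.geom_sum_eq_zero, mul_assoc, hζ.ne_zero]
    using hζ.one_add_add_sq_mul_one_add_sq_ne_zero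

theorem eval_aeval_mul_geom_sum_sq {P : MvPolynomial (Fin 2) ℂ}
    (hP : ∀ u v : ℂ, u * v ≠ 1 → u * v ≠ -1 → (u * v) ^ 5 ≠ 1 →
      MvPolynomial.eval ![u, v] P = Est u v)
    {u : ℂ} (hu : ((X ^ 5 - 1) * (X + 1) : ℂ[X]).eval u ≠ 0) :
    (MvPolynomial.aeval ![X, 1] P).eval u * ((∑ i ∈ range 5, X ^ i) ^ 2 : ℂ[X]).eval u =
      Est_one_numerator.eval u := by
  simp only [eval_mul, eval_sub, eval_add, eval_pow, eval_X, eval_one, ne_eq, mul_eq_zero,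
    not_or, sub_eq_zero] at hu
  obtain ⟨h5, hadd⟩ := hu
  have h1 : u ≠ 1 := fun h => h5 (by simp [h])
  have hneg : u ≠ -1 := fun h => hadd (by simp [h])
  have hrestrict : (MvPolynomial.aeval ![X, 1] P).eval u = MvPolynomial.eval ![u, 1] P := by
    rw [MvPolynomial.polynomial_eval_aeval]
    congr 2
    funext i
    fin_cases i <;> simp
  rw [← Est_one_mul_geom_sum_sq h5 hneg, hrestrict,
    hP u 1 (by simpa using h1) (by simpa using hneg) (by simpa using h5)]
  simp [eval_finsetSum]

theorem Est_not_polynomial :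
    ¬ ∃ P : MvPolynomial (Fin 2) ℂ, ∀ u v : ℂ,
      u * v ≠ 1 → u * v ≠ -1 → (u * v) ^ 5 ≠ 1 →
      MvPolynomial.eval ![u, v] P =
        ((1 - u ^ 2 * v) ^ 3 * (1 - u * v ^ 2) ^ 3
            - (u * v) ^ 4 * (1 - u) ^ 3 * (1 - v) ^ 3)
          / ((1 - u * v) * (1 - (u * v) ^ 2))
        - (u * v) ^ 2 / 2 *
            ((1 - u) ^ 3 * (1 - v) ^ 3 / (1 - u * v)
              - (1 + u) ^ 3 * (1 + v) ^ 3 / (1 + u * v))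
        + 64 * (u * v) ^ 5 * (1 + u * v + (u * v) ^ 2) * (1 + (u * v) ^ 2)
            * ((u * v - 1) / ((u * v) ^ 5 - 1)) ^ 2 := by
  rintro ⟨P, hP⟩
  obtain ⟨ζ, hζ⟩ : ∃ ζ : ℂ, IsPrimitiveRoot ζ 5 :=
    ⟨_, Complex.isPrimitiveRoot_exp 5 (by norm_num)⟩
  have hq : ((X ^ 5 - 1) * (X + 1) : ℂ[X]) ≠ 0 := fun h => by simpa using congrArg (eval 0) h
  have hΦζ : ((∑ i ∈ range 5, X ^ i) ^ 2 : ℂ[X]).eval ζ = 0 := by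
    simp [eval_finsetSum, hζ.geom_sum_eq_zero]
  exact eval_Est_one_numerator_ne_zero hζ
    (eval_eq_zero_of_eval_mul_eq hq (fun _ => eval_aeval_mul_geom_sum_sq hP) hΦζ)
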